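/- arXiv:2208.07100 — 2 statements merged into one kernel-verified Lean document; each statement's English description precedes it below -/
import Mathlib

section
/- Let Π be a DatalogMTL program whose rule heads are generated by the grammar M' ::= ⊤ | P(s) | ■⁻_ρ M' | ■⁺_ρ M' (in particular, ⊥ does not occur in any head), and let D be a dataset. Then can(Π,D) is a model of both Π and D, and it is the least such model (can(Π,D) ⊆ 𝔍 for every model 𝔍 of Π and D); in particular Π and D are consistent. -/
namespace DatalogMTL

/-- An interval: a nonempty convex subset of the rational timeline. -/
structure Intvl where
  carrier : Set ℚ
  nonempty : carrier.Nonempty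
  convex : ∀ ⦃a b c : ℚ⦄, a ∈ carrier → c ∈ carrier → a ≤ b → b ≤ c → b ∈ carrier

/-- An interval containing only non-negative rationals. -/
def Intvl.Nonneg (ρ : Intvl) : Prop := ∀ t ∈ ρ.carrier, (0 : ℚ) ≤ t

/-- Intervals indexing metric operators: only non-negative rationals. -/
abbrev NNIntvl := {ρ : Intvl // ρ.Nonneg}

/-- Terms: variables or constants (both named by naturals). -/
inductive Term where
  | var (v : ℕ)
  | const (c : ℕ)

/-- A (possibly non-ground) relational atom. -/
structure Atom where
  pred : ℕ
  args : List Term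

/-- A ground relational atom. -/
structure GAtom where
  pred : ℕ
  args : List ℕ

/-- Applying a substitution (assignment of constants to variables) to a term. -/
def Term.subst (σ : ℕ → ℕ) : Term → ℕ
  | Term.var v => σ v
  | Term.const c => c

/-- Applying a substitution to a relational atom, producing a ground atom. -/
def Atom.subst (σ : ℕ → ℕ) (A : Atom) : GAtom := ⟨A.pred, A.args.map (Term.subst σ)⟩

/-- Metric atoms over atoms of type `α`. -/
inductive MA (α : Type) where
  | top : MA α
  | bot : MA α
  | atom (A : α) : MA α
  | diaMinus (ρ : NNIntvl) (M : MA α) : MA α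
  | diaPlus (ρ : NNIntvl) (M : MA α) : MA α
  | boxMinus (ρ : NNIntvl) (M : MA α) : MA α
  | boxPlus (ρ : NNIntvl) (M : MA α) : MA α
  | since (ρ : NNIntvl) (M₁ M₂ : MA α) : MA α
  | untl (ρ : NNIntvl) (M₁ M₂ : MA α) : MA α

def MA.map {α β : Type} (g : α → β) : MA α → MA β
  | .top => .top
  | .bot => .bot
  | .atom A => .atom (g A)
  | .diaMinus ρ M => .diaMinus ρ (M.map g)
  | .diaPlus ρ M => .diaPlus ρ (M.map g)
  | .boxMinus ρ M => .boxMinus ρ (M.map g)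
  | .boxPlus ρ M => .boxPlus ρ (M.map g)
  | .since ρ M₁ M₂ => .since ρ (M₁.map g) (M₂.map g)
  | .untl ρ M₁ M₂ => .untl ρ (M₁.map g) (M₂.map g)

/-- Grounding a metric atom by a substitution. -/
def MA.subst (M : MA Atom) (σ : ℕ → ℕ) : MA GAtom := M.map (Atom.subst σ)

/-- An interpretation: for each ground relational atom and rational time point,
whether the atom holds there. -/
def Interp : Type := GAtom → ℚ → Prop

/-- Containment of interpretations. -/
def leI (I J : Interp) : Prop := ∀ A t, I A t → J A t

/-- Satisfaction of ground metric atoms at a time point. -/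
def sat (I : Interp) : ℚ → MA GAtom → Prop
  | _, .top => True
  | _, .bot => False
  | t, .atom A => I A t
  | t, .diaMinus ρ M => ∃ t', (t - t') ∈ ρ.1.carrier ∧ sat I t' M
  | t, .diaPlus ρ M => ∃ t', (t' - t) ∈ ρ.1.carrier ∧ sat I t' M
  | t, .boxMinus ρ M => ∀ t', (t - t') ∈ ρ.1.carrier → sat I t' M
  | t, .boxPlus ρ M => ∀ t', (t' - t) ∈ ρ.1.carrier → sat I t' M
  | t, .since ρ M₁ M₂ =>
      ∃ t', (t - t') ∈ ρ.1.carrier ∧ sat I t' M₂ ∧ ∀ t'', t' < t'' → t'' < t → sat I t'' M₁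
  | t, .untl ρ M₁ M₂ =>
      ∃ t', (t' - t) ∈ ρ.1.carrier ∧ sat I t' M₂ ∧ ∀ t'', t < t'' → t'' < t' → sat I t'' M₁

/-- Satisfaction of a ground metric atom throughout a set of time points. -/
def satSet (I : Interp) (M : MA GAtom) (s : Set ℚ) : Prop := ∀ t ∈ s, sat I t M

/-- Satisfaction of a ground metric atom throughout an interval. -/
def satIvl (I : Interp) (M : MA GAtom) (ρ : Intvl) : Prop := satSet I M ρ.carrier

/-- A fact `M@ρ`. -/
structure Fact where
  atom : GAtom
  ivl : Intvl

/-- The least model of a set of facts. -/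
def interpOf (F : Set Fact) : Interp := fun A t => ∃ f ∈ F, f.atom = A ∧ t ∈ f.ivl.carrier

/-- A dataset: a finite set of facts. -/
structure Dataset where
  facts : Set Fact
  finite : facts.Finite

/-- The least model `𝔍_D` of a dataset `D`. -/
def Dataset.interp (D : Dataset) : Interp := interpOf D.facts

/-- An interpretation satisfies a fact if the atom holds throughout the interval. -/
def satFact (I : Interp) (f : Fact) : Prop := satIvl I (MA.atom f.atom) f.ivl

/-- The head grammar `M' ::= ⊤ | P(s) | ■⁻ρ M' | ■⁺ρ M'`. -/
inductive HeadOK {α : Type} : MA α → Prop where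
  | top : HeadOK MA.top
  | atom (A : α) : HeadOK (MA.atom A)
  | boxMinus (ρ : NNIntvl) {M : MA α} : HeadOK M → HeadOK (MA.boxMinus ρ M)
  | boxPlus (ρ : NNIntvl) {M : MA α} : HeadOK M → HeadOK (MA.boxPlus ρ M)

/-- Variables of a relational atom. -/
def Atom.vars (A : Atom) : Set ℕ := {v | Term.var v ∈ A.args}

/-- Variables of a metric atom. -/
def MA.vars : MA Atom → Set ℕ
  | .top => ∅
  | .bot => ∅
  | .atom A => A.vars
  | .diaMinus _ M => M.vars
  | .diaPlus _ M => M.vars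
  | .boxMinus _ M => M.vars
  | .boxPlus _ M => M.vars
  | .since _ M₁ M₂ => M₁.vars ∪ M₂.vars
  | .untl _ M₁ M₂ => M₁.vars ∪ M₂.vars

/-- Variables of a metric atom occurring outside left operands of `S` and `U`. -/
def MA.safeVars : MA Atom → Set ℕ
  | .top => ∅
  | .bot => ∅
  | .atom A => A.vars
  | .diaMinus _ M => M.safeVars
  | .diaPlus _ M => M.safeVars
  | .boxMinus _ M => M.safeVars
  | .boxPlus _ M => M.safeVars
  | .since _ _ M₂ => M₂.safeVars
  | .untl _ _ M₂ => M₂.safeVars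

/-- A (safe) rule `M' ← M₁ ∧ … ∧ Mₙ`, `n ≥ 1`, with head from the head grammar. -/
structure Rule where
  head : MA Atom
  body : List (MA Atom)
  body_ne : body ≠ []
  head_ok : HeadOK head
  safe : head.vars ⊆ ⋃ M ∈ body, MA.safeVars M

/-- A program: a finite set of (safe) rules. -/
structure Program where
  rules : Set Rule
  finite : rules.Finite

/-- An interpretation satisfies a rule if it satisfies all its ground instances. -/
def modelsRule (I : Interp) (r : Rule) : Prop :=
  ∀ (σ : ℕ → ℕ) (t : ℚ), (∀ M ∈ r.body, sat I t (M.subst σ)) → sat I t (r.head.subst σ)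

def modelsProgram (I : Interp) (P : Program) : Prop := ∀ r ∈ P.rules, modelsRule I r

def modelsDataset (I : Interp) (D : Dataset) : Prop := ∀ f ∈ D.facts, satFact I f

/-- `gEntails M s A u` : every interpretation satisfying the ground metric atom `M`
throughout `s` satisfies the ground relational atom `A` throughout `u`. -/
def gEntails (M : MA GAtom) (s : Set ℚ) (A : GAtom) (u : Set ℚ) : Prop :=
  ∀ J : Interp, satSet J M s → ∀ t ∈ u, J A t

/-- The immediate consequence operator `T_Π`: the least interpretation containing `I`
and satisfying, for each ground rule instance whose body is satisfied by `I` at `t`,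
the head of the instance at `t`. -/
def TP (P : Program) (I : Interp) : Interp := fun A t' =>
  I A t' ∨ ∃ r ∈ P.rules, ∃ (σ : ℕ → ℕ) (t : ℚ),
    (∀ M ∈ r.body, sat I t (M.subst σ)) ∧ gEntails (r.head.subst σ) {t} A {t'}

/-- Finite powers of the immediate consequence operator. -/
def TPiter (P : Program) : ℕ → Interp → Interp
  | 0, I => I
  | k + 1, I => TP P (TPiter P k I)

/-- The canonical interpretation `can(Π,D) = T_Π^{ω₁}(𝔍_D)`, characterised as the least
prefixed point of the (monotone, inflationary) operator `T_Π` containing the given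
interpretation (the transfinite iteration stabilises at `ω₁` on this least fixpoint). -/
def canon (P : Program) (I : Interp) : Interp := fun A t =>
  ∀ J : Interp, leI I J → leI (TP P J) J → J A t

/-- Projection of an interpretation to a set of time points. -/
def proj (I : Interp) (s : Set ℚ) : Interp := fun A t => t ∈ s ∧ I A t

/-- Metric atoms mentioning only relational atoms and past operators `◆⁻, ■⁻, S`. -/
def MA.PastOnly {α : Type} : MA α → Prop
  | .atom _ => True
  | .diaMinus _ M => M.PastOnly
  | .boxMinus _ M => M.PastOnly
  | .since _ M₁ M₂ => M₁.PastOnly ∧ M₂.PastOnly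
  | _ => False

/-- Metric atoms mentioning only relational atoms and future operators `◆⁺, ■⁺, U`. -/
def MA.FutureOnly {α : Type} : MA α → Prop
  | .atom _ => True
  | .diaPlus _ M => M.FutureOnly
  | .boxPlus _ M => M.FutureOnly
  | .untl _ M₁ M₂ => M₁.FutureOnly ∧ M₂.FutureOnly
  | _ => False

def Rule.ForwardProp (r : Rule) : Prop :=
  (∀ M ∈ r.body, MA.PastOnly M) ∧ MA.FutureOnly r.head

def Rule.BackwardProp (r : Rule) : Prop :=
  (∀ M ∈ r.body, MA.FutureOnly M) ∧ MA.PastOnly r.head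

def Program.ForwardProp (P : Program) : Prop := ∀ r ∈ P.rules, r.ForwardProp

def Program.BackwardProp (P : Program) : Prop := ∀ r ∈ P.rules, r.BackwardProp

/-- Predicates mentioned in a metric atom. -/
def MA.apreds : MA Atom → Set ℕ
  | .top => ∅
  | .bot => ∅
  | .atom A => {A.pred}
  | .diaMinus _ M => M.apreds
  | .diaPlus _ M => M.apreds
  | .boxMinus _ M => M.apreds
  | .boxPlus _ M => M.apreds
  | .since _ M₁ M₂ => M₁.apreds ∪ M₂.apreds
  | .untl _ M₁ M₂ => M₁.apreds ∪ M₂.apreds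

def Rule.headPreds (r : Rule) : Set ℕ := r.head.apreds

def Rule.bodyPreds (r : Rule) : Set ℕ := ⋃ M ∈ r.body, MA.apreds M

/-- Edge of the dependency graph: some rule mentions `Q` in its body and `R` in its head. -/
def DepEdge (P : Program) (Q R : ℕ) : Prop :=
  ∃ r ∈ P.rules, Q ∈ r.bodyPreds ∧ R ∈ r.headPreds

/-- A predicate is recursive if the dependency graph has a path containing a cycle
and ending in it. -/
def Recursive (P : Program) (Q : ℕ) : Prop :=
  ∃ R : ℕ, Relation.TransGen (DepEdge P) R R ∧ Relation.ReflTransGen (DepEdge P) R Q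

def Program.restrict (P : Program) (p : Rule → Prop) : Program :=
  ⟨{r | r ∈ P.rules ∧ p r}, P.finite.subset (fun _ hr => hr.1)⟩

/-- The non-recursive fragment: rules whose heads mention only non-recursive predicates. -/
def Program.nrFrag (P : Program) : Program :=
  P.restrict (fun r => ∀ Q ∈ r.headPreds, ¬ Recursive P Q)

/-- The recursive fragment: the remaining rules. -/
def Program.recFrag (P : Program) : Program :=
  P.restrict (fun r => ¬ ∀ Q ∈ r.headPreds, ¬ Recursive P Q)

/-- Removing a single rule from a program. -/
def Program.erase (P : Program) (r : Rule) : Program := P.restrict (fun r' => r' ≠ r)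

/-- `ρ` is a subset-maximal interval on which `I` satisfies `M`. -/
def MaximalSat (I : Interp) (M : MA GAtom) (ρ : Intvl) : Prop :=
  satIvl I M ρ ∧ ∀ ρ' : Intvl, ρ.carrier ⊆ ρ'.carrier → satIvl I M ρ' → ρ'.carrier = ρ.carrier

/-- The single relational atom occurring in a head-shaped metric atom (if any). -/
def MA.headAtom {α : Type} : MA α → Option α
  | .atom A => some A
  | .boxMinus _ M => M.headAtom
  | .boxPlus _ M => M.headAtom
  | _ => none

/-- The set `r[F]` of facts derived by rule `r` from the facts `F` (Definition 1). -/
def Rule.derive (r : Rule) (F : Set Fact) : Set Fact :=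
  { f | ∃ (σ : ℕ → ℕ) (ρs : Fin r.body.length → Intvl),
      (∀ i : Fin r.body.length, MaximalSat (interpOf F) ((r.body.get i).subst σ) (ρs i)) ∧
      (r.head.subst σ).headAtom = some f.atom ∧
      gEntails (r.head.subst σ) (⋂ i, (ρs i).carrier) f.atom f.ivl.carrier ∧
      ∀ ρ' : Intvl, f.ivl.carrier ⊆ ρ'.carrier →
        gEntails (r.head.subst σ) (⋂ i, (ρs i).carrier) f.atom ρ'.carrier →
        ρ'.carrier = f.ivl.carrier }

/-- The set `Π[F]` of facts derived from `F` by one-step application of `Π`. -/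
def Program.derive (P : Program) (F : Set Fact) : Set Fact := ⋃ r ∈ P.rules, Rule.derive r F

/-- The coalescing `F₁ ⋓ F₂`: all facts `M@ρ` such that the least model of `F₁ ∪ F₂`
satisfies `M@ρ` but no `M@ρ'` for an interval `ρ'` strictly containing `ρ`. -/
def coalesce (F₁ F₂ : Set Fact) : Set Fact :=
  { f | satIvl (interpOf (F₁ ∪ F₂)) (MA.atom f.atom) f.ivl ∧
        ∀ ρ' : Intvl, f.ivl.carrier ⊂ ρ'.carrier →
          ¬ satIvl (interpOf (F₁ ∪ F₂)) (MA.atom f.atom) ρ' }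

lemma sat_mono {I J : Interp} (h : leI I J) :
    ∀ (M : MA GAtom) (t : ℚ), sat I t M → sat J t M := by
  intro M
  induction M with
  | top => intro t _; trivial
  | bot => intro t hs; exact hs
  | atom A => intro t hs; exact h A t hs
  | diaMinus ρ M ih => rintro t ⟨t', h1, h2⟩; exact ⟨t', h1, ih t' h2⟩
  | diaPlus ρ M ih => rintro t ⟨t', h1, h2⟩; exact ⟨t', h1, ih t' h2⟩
  | boxMinus ρ M ih => intro t hs t' ht'; exact ih t' (hs t' ht')
  | boxPlus ρ M ih => intro t hs t' ht'; exact ih t' (hs t' ht')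
  | since ρ M₁ M₂ ih1 ih2 =>
      rintro t ⟨t', h1, h2, h3⟩
      exact ⟨t', h1, ih2 t' h2, fun t'' ha hb => ih1 t'' (h3 t'' ha hb)⟩
  | untl ρ M₁ M₂ ih1 ih2 =>
      rintro t ⟨t', h1, h2, h3⟩
      exact ⟨t', h1, ih2 t' h2, fun t'' ha hb => ih1 t'' (h3 t'' ha hb)⟩

lemma headOK_map {α β : Type} (g : α → β) {M : MA α} (h : HeadOK M) :
    HeadOK (M.map g) := by
  induction h with
  | top => exact .top
  | atom A => exact .atom _
  | boxMinus ρ _ ih => exact .boxMinus ρ ih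
  | boxPlus ρ _ ih => exact .boxPlus ρ ih

lemma head_sat {M : MA GAtom} (h : HeadOK M) :
    ∀ (J : Interp) (t : ℚ), (∀ A t', gEntails M {t} A {t'} → J A t') → sat J t M := by
  induction h with
  | top => intro J t _; trivial
  | atom A =>
      intro J t hJ
      refine hJ A t ?_
      intro K hK u hu
      have h1 : sat K t (MA.atom A) := hK t rfl
      cases hu
      exact h1
  | boxMinus ρ hM ih =>
      intro J t hJ t' ht'
      refine ih J t' ?_
      intro A u hE
      refine hJ A u ?_
      intro K hK
      have hKt := hK t rfl
      exact hE K (fun s hs => by cases hs; exact hKt t' ht')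
  | boxPlus ρ hM ih =>
      intro J t hJ t' ht'
      refine ih J t' ?_
      intro A u hE
      refine hJ A u ?_
      intro K hK
      have hKt := hK t rfl
      exact hE K (fun s hs => by cases hs; exact hKt t' ht')

/-- for a program whose rule heads obey the head grammar (no `⊥` in heads,
which is built into `Rule`), `can(Π,D)` is the least model of `Π` and `D`; in particular
`Π` and `D` are consistent. -/
theorem canonical_is_least_model (P : Program) (D : Dataset) :
    modelsProgram (canon P D.interp) P ∧ modelsDataset (canon P D.interp) D ∧
    (∀ J : Interp, modelsProgram J P → modelsDataset J D → leI (canon P D.interp) J) ∧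
    (∃ J : Interp, modelsProgram J P ∧ modelsDataset J D) := by
  have hIncan : leI D.interp (canon P D.interp) := fun A t h J hIJ _ => hIJ A t h
  have hpre : leI (TP P (canon P D.interp)) (canon P D.interp) := by
    intro A t h J hIJ hTJ
    have hsub : leI (canon P D.interp) J := fun A t hc => hc J hIJ hTJ
    apply hTJ A t
    cases h with
    | inl h => exact Or.inl (hsub A t h)
    | inr h =>
        obtain ⟨r, hr, σ, s, hbody, hE⟩ := h
        exact Or.inr ⟨r, hr, σ, s, fun M hM => sat_mono hsub _ _ (hbody M hM), hE⟩
  have hprog : modelsProgram (canon P D.interp) P := by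
    intro r hr σ t hbody
    refine head_sat (headOK_map _ r.head_ok) _ t ?_
    intro A t' hE
    exact hpre A t' (Or.inr ⟨r, hr, σ, t, hbody, hE⟩)
  have hdata : modelsDataset (canon P D.interp) D := by
    intro f hf t ht
    exact hIncan f.atom t ⟨f, hf, rfl, ht⟩
  refine ⟨hprog, hdata, ?_, ⟨canon P D.interp, hprog, hdata⟩⟩
  intro J hP hD A t hc
  apply hc
  · rintro A t ⟨f, hf, rfl, ht⟩
    exact hD f hf t ht
  · intro A t h
    cases h with
    | inl h => exact h
    | inr h =>
        obtain ⟨r, hr, σ, s, hbody, hE⟩ := h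
        have hhead := hP r hr σ s hbody
        exact hE J (fun u hu => by cases hu; exact hhead) t rfl

end DatalogMTL
end

section
/- Let D be a dataset and M a ground metric atom that does not mention ⊥. Then the set {t ∈ ℚ : 𝔍_D, t ⊨ M} is a finite union of intervals (possibly empty); consequently, every time point t at which 𝔍_D satisfies M belongs to a unique subset-maximal interval ρ such that 𝔍_D satisfies M@ρ. In particular, the set inst(r,D) of instances of any rule r with respect to D is well defined and finite up to the choice of substitutions over the constants of r and D. -/
namespace DatalogMTL

/-- Ground metric atoms not mentioning `⊥`. -/
def MA.NoBot {α : Type} : MA α → Prop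
  | .top => True
  | .bot => False
  | .atom _ => True
  | .diaMinus _ M => M.NoBot
  | .diaPlus _ M => M.NoBot
  | .boxMinus _ M => M.NoBot
  | .boxPlus _ M => M.NoBot
  | .since _ M₁ M₂ => M₁.NoBot ∧ M₂.NoBot
  | .untl _ M₁ M₂ => M₁.NoBot ∧ M₂.NoBot

/-! ### Auxiliary development -/

/-- Convexity of a set of rationals (matching the `Intvl.convex` field). -/
abbrev Cvx (s : Set ℚ) : Prop := ∀ ⦃a b c : ℚ⦄, a ∈ s → c ∈ s → a ≤ b → b ≤ c → b ∈ s

/-- The union of a list of intervals. -/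
def L2S : List Intvl → Set ℚ
  | [] => ∅
  | ρ :: l => ρ.carrier ∪ L2S l

/-- Finite unions of intervals. -/
def BU (s : Set ℚ) : Prop := ∃ l : List Intvl, s = L2S l

lemma mem_L2S {t : ℚ} : ∀ {l : List Intvl}, t ∈ L2S l ↔ ∃ ρ ∈ l, t ∈ ρ.carrier
  | [] => by simp [L2S]
  | ρ₀ :: l => by
      simp only [L2S, Set.mem_union, mem_L2S (l := l), List.mem_cons]
      constructor
      · rintro (h | ⟨ρ, h1, h2⟩)
        exacts [⟨ρ₀, Or.inl rfl, h⟩, ⟨ρ, Or.inr h1, h2⟩]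
      · rintro ⟨ρ, (rfl | h1), h2⟩
        exacts [Or.inl h2, Or.inr ⟨ρ, h1, h2⟩]

lemma subset_L2S {c : Intvl} {l : List Intvl} (h : c ∈ l) : c.carrier ⊆ L2S l :=
  fun t ht => mem_L2S.mpr ⟨c, h, ht⟩

lemma L2S_eq (l : List Intvl) : L2S l = ⋃ ρ ∈ l, ρ.carrier := by
  ext t; simp [mem_L2S]

lemma BU_empty : BU ∅ := ⟨[], rfl⟩

lemma BU_union {s u : Set ℚ} (hs : BU s) (hu : BU u) : BU (s ∪ u) := by
  obtain ⟨l₁, rfl⟩ := hs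
  obtain ⟨l₂, rfl⟩ := hu
  refine ⟨l₁ ++ l₂, ?_⟩
  ext t; simp [mem_L2S, List.mem_append, or_and_right, exists_or]

lemma BU_cvx {s : Set ℚ} (h : Cvx s) : BU s := by
  by_cases hne : s.Nonempty
  · exact ⟨[⟨s, hne, h⟩], by simp [L2S]⟩
  · rw [Set.not_nonempty_iff_eq_empty] at hne
    exact hne ▸ BU_empty

lemma cvx_inter {s u : Set ℚ} (hs : Cvx s) (hu : Cvx u) : Cvx (s ∩ u) :=
  fun _ _ _ ha hc h1 h2 => ⟨hs ha.1 hc.1 h1 h2, hu ha.2 hc.2 h1 h2⟩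

lemma BU_inter_cvx' {u : Set ℚ} (hu : Cvx u) : ∀ l : List Intvl, BU (L2S l ∩ u)
  | [] => by rw [show L2S [] = (∅ : Set ℚ) from rfl, Set.empty_inter]; exact BU_empty
  | c :: l => by
      rw [show L2S (c :: l) = c.carrier ∪ L2S l from rfl, Set.union_inter_distrib_right]
      exact BU_union (BU_cvx (cvx_inter c.convex hu)) (BU_inter_cvx' hu l)

lemma BU_inter_cvx {s u : Set ℚ} (hs : BU s) (hu : Cvx u) : BU (s ∩ u) := by
  obtain ⟨l, rfl⟩ := hs; exact BU_inter_cvx' hu l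

lemma BU_inter {s u : Set ℚ} (hs : BU s) (hu : BU u) : BU (s ∩ u) := by
  obtain ⟨l, rfl⟩ := hu
  induction l with
  | nil => rw [show L2S [] = (∅ : Set ℚ) from rfl, Set.inter_empty]; exact BU_empty
  | cons c l ih =>
      rw [show L2S (c :: l) = c.carrier ∪ L2S l from rfl, Set.inter_union_distrib_left]
      exact BU_union (BU_inter_cvx hs c.convex) ih

lemma cvx_compl_eq {c : Set ℚ} (hc : Cvx c) :
    cᶜ = {x | ∀ y ∈ c, x < y} ∪ {x | ∀ y ∈ c, y < x} := by
  ext x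
  simp only [Set.mem_compl_iff, Set.mem_union, Set.mem_setOf_eq]
  constructor
  · intro hx
    by_cases hL : ∀ y ∈ c, x < y
    · exact Or.inl hL
    · push_neg at hL
      obtain ⟨y₁, hy₁, hy₁'⟩ := hL
      refine Or.inr fun y hy => ?_
      by_contra hlt
      push_neg at hlt
      exact hx (hc hy₁ hy hy₁' hlt)
  · rintro (h | h) hx
    · exact lt_irrefl x (h x hx)
    · exact lt_irrefl x (h x hx)

lemma BU_compl {s : Set ℚ} (hs : BU s) : BU sᶜ := by
  obtain ⟨l, rfl⟩ := hs
  induction l with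
  | nil =>
      rw [show L2S [] = (∅ : Set ℚ) from rfl, Set.compl_empty]
      exact BU_cvx (fun _ _ _ _ _ _ _ => trivial)
  | cons c l ih =>
      rw [show L2S (c :: l) = c.carrier ∪ L2S l from rfl, Set.compl_union]
      refine BU_inter ?_ ih
      rw [cvx_compl_eq c.convex]
      refine BU_union (BU_cvx ?_) (BU_cvx ?_)
      · intro a b d ha hd h1 h2 y hy
        exact lt_of_le_of_lt h2 (hd y hy)
      · intro a b d ha hd h1 h2 y hy
        exact lt_of_lt_of_le (ha y hy) h1

/-- Reflection of a set of time points. -/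
def rev (s : Set ℚ) : Set ℚ := {t | -t ∈ s}

lemma cvx_rev {s : Set ℚ} (hs : Cvx s) : Cvx (rev s) :=
  fun _ _ _ ha hc h1 h2 => hs hc ha (neg_le_neg h2) (neg_le_neg h1)

lemma BU_rev {s : Set ℚ} (hs : BU s) : BU (rev s) := by
  obtain ⟨l, rfl⟩ := hs
  induction l with
  | nil =>
      rw [show L2S [] = (∅ : Set ℚ) from rfl,
        show rev (∅ : Set ℚ) = ∅ from by ext t; simp [rev]]
      exact BU_empty
  | cons c l ih =>
      rw [show L2S (c :: l) = c.carrier ∪ L2S l from rfl,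
        show rev (c.carrier ∪ L2S l) = rev c.carrier ∪ rev (L2S l) from by ext t; simp [rev]]
      exact BU_union (BU_cvx (cvx_rev c.convex)) ih

/-- Minkowski-type sum: times reachable from `s` through a delay in `p`. -/
def msum (p s : Set ℚ) : Set ℚ := {t | ∃ t', t - t' ∈ p ∧ t' ∈ s}

lemma cvx_between {p : Set ℚ} (hp : Cvx p) {r₁ r₂ x : ℚ} (h₁ : r₁ ∈ p) (h₂ : r₂ ∈ p)
    (hl : min r₁ r₂ ≤ x) (hr : x ≤ max r₁ r₂) : x ∈ p := by
  rcases le_total r₁ r₂ with h | h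
  · rw [min_eq_left h] at hl; rw [max_eq_right h] at hr; exact hp h₁ h₂ hl hr
  · rw [min_eq_right h] at hl; rw [max_eq_left h] at hr; exact hp h₂ h₁ hl hr

lemma msum_cvx {p s : Set ℚ} (hp : Cvx p) (hs : Cvx s) : Cvx (msum p s) := by
  rintro a b c ⟨t₁, hr₁, ht₁⟩ ⟨t₂, hr₂, ht₂⟩ hab hbc
  set x := max (min (a - t₁) (c - t₂)) (b - max t₁ t₂) with hxdef
  have hm1 := min_le_left (a - t₁) (c - t₂)
  have hm2 := min_le_right (a - t₁) (c - t₂)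
  have hM1 := le_max_left (a - t₁) (c - t₂)
  have hM2 := le_max_right (a - t₁) (c - t₂)
  have ht1 := le_max_left t₁ t₂
  have ht2 := le_max_right t₁ t₂
  have htm1 := min_le_left t₁ t₂
  have htm2 := min_le_right t₁ t₂
  have hxl : min (a - t₁) (c - t₂) ≤ x := le_max_left _ _
  have hxr : b - max t₁ t₂ ≤ x := le_max_right _ _
  have hxu : x ≤ max (a - t₁) (c - t₂) := max_le (le_trans hm1 hM1) (by linarith)
  refine ⟨b - x, ?_, ?_⟩
  · rw [sub_sub_cancel]
    exact cvx_between hp hr₁ hr₂ hxl hxu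
  · refine cvx_between hs ht₁ ht₂ ?_ ?_
    · have : x ≤ b - min t₁ t₂ := max_le (by linarith) (by linarith)
      linarith
    · linarith

lemma BU_msum {p s : Set ℚ} (hp : Cvx p) (hs : BU s) : BU (msum p s) := by
  obtain ⟨l, rfl⟩ := hs
  induction l with
  | nil =>
      rw [show L2S [] = (∅ : Set ℚ) from rfl,
        show msum p (∅ : Set ℚ) = ∅ from by ext t; simp [msum]]
      exact BU_empty
  | cons c l ih =>
      rw [show L2S (c :: l) = c.carrier ∪ L2S l from rfl,
        show msum p (c.carrier ∪ L2S l) = msum p c.carrier ∪ msum p (L2S l) from by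
          ext t
          simp only [msum, Set.mem_union, Set.mem_setOf_eq]
          constructor
          · rintro ⟨t', h1, (h2 | h2)⟩
            exacts [Or.inl ⟨t', h1, h2⟩, Or.inr ⟨t', h1, h2⟩]
          · rintro (⟨t', h1, h2⟩ | ⟨t', h1, h2⟩)
            exacts [⟨t', h1, Or.inl h2⟩, ⟨t', h1, Or.inr h2⟩]]
      exact BU_union (BU_cvx (msum_cvx hp c.convex)) ih

/-- Upper bounds of a set. -/
def upS (c : Set ℚ) : Set ℚ := {x | ∀ y ∈ c, y ≤ x}
/-- Lower bounds of a set. -/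
def dnS (c : Set ℚ) : Set ℚ := {x | ∀ y ∈ c, x ≤ y}

lemma cvx_upS (c : Set ℚ) : Cvx (upS c) :=
  fun _ _ _ ha _ h1 _ y hy => le_trans (ha y hy) h1

lemma cvx_dnS (c : Set ℚ) : Cvx (dnS c) :=
  fun _ _ _ _ hc _ h2 y hy => le_trans h2 (hc y hy)

/-- Recursive decomposition of the "since" set along the components of `S₁ᶜ`. -/
def sinceAux (p : Set ℚ) : List Intvl → Set ℚ → Set ℚ
  | [], X => msum p X
  | c :: cs, X => sinceAux p cs (X ∩ upS c.carrier) ∪ (dnS c.carrier ∩ sinceAux p cs X)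

lemma sinceAux_char (p : Set ℚ) : ∀ (cs : List Intvl) (X : Set ℚ),
    sinceAux p cs X = {t | ∃ t', t - t' ∈ p ∧ t' ∈ X ∧
      ∀ c ∈ cs, (∀ y ∈ c.carrier, y ≤ t') ∨ (∀ y ∈ c.carrier, t ≤ y)}
  | [], X => by ext t; simp [sinceAux, msum]
  | c :: cs, X => by
      ext t
      simp only [sinceAux, Set.mem_union, sinceAux_char p cs, Set.mem_setOf_eq,
        Set.mem_inter_iff, upS, dnS, List.mem_cons]
      constructor
      · rintro (⟨t', h1, ⟨h2, h2'⟩, h3⟩ | ⟨hd, t', h1, h2, h3⟩)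
        · refine ⟨t', h1, h2, fun c' hc' => ?_⟩
          rcases hc' with rfl | hc'
          exacts [Or.inl h2', h3 c' hc']
        · refine ⟨t', h1, h2, fun c' hc' => ?_⟩
          rcases hc' with rfl | hc'
          exacts [Or.inr hd, h3 c' hc']
      · rintro ⟨t', h1, h2, h3⟩
        rcases h3 c (Or.inl rfl) with h | h
        · exact Or.inl ⟨t', h1, ⟨h2, h⟩, fun c' hc' => h3 c' (Or.inr hc')⟩
        · exact Or.inr ⟨h, t', h1, h2, fun c' hc' => h3 c' (Or.inr hc')⟩

lemma BU_sinceAux {p : Set ℚ} (hp : Cvx p) :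
    ∀ (cs : List Intvl) {X : Set ℚ}, BU X → BU (sinceAux p cs X)
  | [], X, hX => BU_msum hp hX
  | c :: cs, X, hX => by
      refine BU_union (BU_sinceAux hp cs (BU_inter_cvx hX (cvx_upS _))) ?_
      rw [Set.inter_comm]
      exact BU_inter_cvx (BU_sinceAux hp cs hX) (cvx_dnS _)

/-- The semantic set of the "since" operator. -/
def sinceSet (p S₁ S₂ : Set ℚ) : Set ℚ :=
  {t | ∃ t', t - t' ∈ p ∧ t' ∈ S₂ ∧ ∀ t'', t' < t'' → t'' < t → t'' ∈ S₁}

lemma since_char {p S₁ S₂ : Set ℚ} (hnn : ∀ x ∈ p, 0 ≤ x)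
    {cs : List Intvl} (hcs : L2S cs = S₁ᶜ) :
    sinceSet p S₁ S₂ = {t | 0 ∈ p ∧ t ∈ S₂} ∪ sinceAux p cs S₂ := by
  rw [sinceAux_char]
  ext t
  simp only [sinceSet, Set.mem_setOf_eq, Set.mem_union]
  constructor
  · rintro ⟨t', h1, h2, h3⟩
    have htt : t' ≤ t := by have := hnn _ h1; linarith
    rcases eq_or_lt_of_le htt with rfl | hlt
    · exact Or.inl ⟨by simpa using h1, h2⟩
    · right
      refine ⟨t', h1, h2, fun c hc => ?_⟩
      have hsub : c.carrier ⊆ S₁ᶜ := hcs ▸ subset_L2S hc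
      by_cases hL : ∀ y ∈ c.carrier, y ≤ t'
      · exact Or.inl hL
      · push_neg at hL
        obtain ⟨y₁, hy₁, hy₁'⟩ := hL
        have hty₁ : t ≤ y₁ := by
          by_contra hy
          push_neg at hy
          exact hsub hy₁ (h3 y₁ hy₁' hy)
        refine Or.inr fun y hy => ?_
        by_contra hyt
        push_neg at hyt
        have hyt' : y ≤ t' := by
          by_contra hgt
          push_neg at hgt
          exact hsub hy (h3 y hgt hyt)
        obtain ⟨q, hq1, hq2⟩ := exists_between hlt
        have hqc : q ∈ c.carrier := c.convex hy hy₁ (by linarith) (by linarith)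
        exact hsub hqc (h3 q hq1 hq2)
  · rintro (⟨h0, h2⟩ | ⟨t', h1, h2, h3⟩)
    · exact ⟨t, by simpa using h0, h2, fun t'' ha hb => absurd (ha.trans hb) (lt_irrefl t)⟩
    · refine ⟨t', h1, h2, fun t'' ha hb => ?_⟩
      by_contra ht''
      have hmem : t'' ∈ L2S cs := by rw [hcs]; exact ht''
      obtain ⟨c, hc, htc⟩ := mem_L2S.mp hmem
      rcases h3 c hc with hcase | hcase
      · exact absurd (hcase _ htc) (not_le.mpr ha)
      · exact absurd (hcase _ htc) (not_le.mpr hb)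

lemma BU_sinceSet {p S₁ S₂ : Set ℚ} (hp : Cvx p) (hnn : ∀ x ∈ p, 0 ≤ x)
    (h1 : BU S₁) (h2 : BU S₂) : BU (sinceSet p S₁ S₂) := by
  obtain ⟨cs, hcs⟩ := BU_compl h1
  rw [since_char hnn hcs.symm]
  refine BU_union ?_ (BU_sinceAux hp cs h2)
  by_cases h0 : (0 : ℚ) ∈ p
  · rw [show {t | 0 ∈ p ∧ t ∈ S₂} = S₂ from by ext t; simp [h0]]
    exact h2
  · rw [show {t | 0 ∈ p ∧ t ∈ S₂} = (∅ : Set ℚ) from by ext t; simp [h0]]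
    exact BU_empty

/-! ### Satisfaction sets are finite unions of intervals -/

lemma BU_sat (I : Interp) (hI : ∀ A, BU {t | I A t}) :
    ∀ M : MA GAtom, BU {t | sat I t M}
  | .top => by
      rw [show {t : ℚ | sat I t .top} = Set.univ from by ext t; simp [sat]]
      exact BU_cvx (fun _ _ _ _ _ _ _ => trivial)
  | .bot => by
      rw [show {t : ℚ | sat I t .bot} = ∅ from by ext t; simp [sat]]
      exact BU_empty
  | .atom A => hI A
  | .diaMinus ρ M => by
      have h := BU_sat I hI M
      rw [show {t | sat I t (.diaMinus ρ M)} = msum ρ.1.carrier {t | sat I t M} from rfl]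
      exact BU_msum ρ.1.convex h
  | .diaPlus ρ M => by
      have h := BU_sat I hI M
      rw [show {t | sat I t (.diaPlus ρ M)}
          = rev (msum ρ.1.carrier (rev {t | sat I t M})) from by
        ext t
        simp only [sat, rev, msum, Set.mem_setOf_eq]
        constructor
        · rintro ⟨t', h1, h2⟩
          exact ⟨-t', by rw [show -t - -t' = t' - t by ring]; exact h1, by simpa using h2⟩
        · rintro ⟨t', h1, h2⟩
          exact ⟨-t', by rw [show -t' - t = -t - t' by ring]; exact h1, h2⟩]
      exact BU_rev (BU_msum ρ.1.convex (BU_rev h))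
  | .boxMinus ρ M => by
      have h := BU_sat I hI M
      rw [show {t | sat I t (.boxMinus ρ M)}
          = (msum ρ.1.carrier {t | sat I t M}ᶜ)ᶜ from by
        ext t
        simp only [sat, msum, Set.mem_compl_iff, Set.mem_setOf_eq, not_exists, not_and,
          not_not]]
      exact BU_compl (BU_msum ρ.1.convex (BU_compl h))
  | .boxPlus ρ M => by
      have h := BU_sat I hI M
      rw [show {t | sat I t (.boxPlus ρ M)}
          = (rev (msum ρ.1.carrier (rev {t | sat I t M}ᶜ)))ᶜ from by
        ext t
        simp only [sat, rev, msum, Set.mem_compl_iff, Set.mem_setOf_eq, not_exists, not_and,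
          not_not]
        constructor
        · intro hall t' hc
          exact hall (-t') (by rw [show -t' - t = -t - t' by ring]; exact hc)
        · intro hall t' hc
          simpa using hall (-t') (by rw [show -t - -t' = t' - t by ring]; exact hc)]
      exact BU_compl (BU_rev (BU_msum ρ.1.convex (BU_rev (BU_compl h))))
  | .since ρ M₁ M₂ => by
      have h1 := BU_sat I hI M₁
      have h2 := BU_sat I hI M₂
      rw [show {t | sat I t (.since ρ M₁ M₂)}
          = sinceSet ρ.1.carrier {t | sat I t M₁} {t | sat I t M₂} from rfl]
      exact BU_sinceSet ρ.1.convex ρ.2 h1 h2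
  | .untl ρ M₁ M₂ => by
      have h1 := BU_sat I hI M₁
      have h2 := BU_sat I hI M₂
      rw [show {t | sat I t (.untl ρ M₁ M₂)}
          = rev (sinceSet ρ.1.carrier (rev {t | sat I t M₁}) (rev {t | sat I t M₂})) from by
        ext t
        simp only [sat, rev, sinceSet, Set.mem_setOf_eq]
        constructor
        · rintro ⟨t', h1, h2, h3⟩
          refine ⟨-t', by rw [show -t - -t' = t' - t by ring]; exact h1, by simpa using h2,
            fun s'' ha hb => ?_⟩
          exact h3 (-s'') (by linarith) (by linarith)
        · rintro ⟨t', h1, h2, h3⟩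
          refine ⟨-t', by rw [show -t' - t = -t - t' by ring]; exact h1, h2,
            fun t'' ha hb => ?_⟩
          simpa using h3 (-t'') (by linarith) (by linarith)]
      exact BU_rev (BU_sinceSet ρ.1.convex ρ.2 (BU_rev h1) (BU_rev h2))

lemma BU_interp (D : Dataset) (A : GAtom) : BU {t | D.interp A t} := by
  have hfin : {f | f ∈ D.facts ∧ f.atom = A}.Finite := D.finite.subset (fun f hf => hf.1)
  refine ⟨hfin.toFinset.toList.map Fact.ivl, ?_⟩
  ext t
  simp only [Set.mem_setOf_eq, Dataset.interp, interpOf, mem_L2S, List.mem_map,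
    Finset.mem_toList, Set.Finite.mem_toFinset]
  constructor
  · rintro ⟨f, hf, hA, ht⟩
    exact ⟨f.ivl, ⟨f, ⟨hf, hA⟩, rfl⟩, ht⟩
  · rintro ⟨ρ, ⟨f, ⟨hf, hA⟩, rfl⟩, ht⟩
    exact ⟨f, hf, hA, ht⟩

/-! ### Maximal convex components -/

/-- The maximal convex subset of `S` containing `t`. -/
def maxConv (S : Set ℚ) (t : ℚ) : Set ℚ := ⋃₀ {c | Cvx c ∧ t ∈ c ∧ c ⊆ S}

lemma maxConv_cvx (S : Set ℚ) (t : ℚ) : Cvx (maxConv S t) := by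
  rintro a b c ⟨c₁, ⟨hc₁, ht₁, hs₁⟩, ha⟩ ⟨c₂, ⟨hc₂, ht₂, hs₂⟩, hc⟩ h1 h2
  rcases le_total b t with hbt | hbt
  · exact ⟨c₁, ⟨hc₁, ht₁, hs₁⟩, hc₁ ha ht₁ h1 hbt⟩
  · exact ⟨c₂, ⟨hc₂, ht₂, hs₂⟩, hc₂ ht₂ hc hbt h2⟩

lemma maxConv_subset (S : Set ℚ) (t : ℚ) : maxConv S t ⊆ S := by
  rintro x ⟨c, ⟨_, _, hs⟩, hx⟩
  exact hs hx

lemma subset_maxConv {S c : Set ℚ} {t : ℚ} (hc : Cvx c) (ht : t ∈ c) (hs : c ⊆ S) :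
    c ⊆ maxConv S t := fun x hx => ⟨c, ⟨hc, ht, hs⟩, hx⟩

lemma mem_maxConv {S : Set ℚ} {t : ℚ} (ht : t ∈ S) : t ∈ maxConv S t :=
  subset_maxConv (fun a b c (ha : a ∈ ({t} : Set ℚ)) (hc : c ∈ ({t} : Set ℚ)) h1 h2 => by
    simp only [Set.mem_singleton_iff] at ha hc ⊢
    subst ha; subst hc; exact le_antisymm h2 h1) rfl (by simpa using ht) rfl

lemma maxConv_eq {S : Set ℚ} {t t' : ℚ} (h : t' ∈ maxConv S t) :
    maxConv S t' = maxConv S t := by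
  have htS : t ∈ S := by
    obtain ⟨c, ⟨_, htc, hcS⟩, _⟩ := h
    exact hcS htc
  have h1 : maxConv S t ⊆ maxConv S t' :=
    subset_maxConv (maxConv_cvx S t) h (maxConv_subset S t)
  have h2 : maxConv S t' ⊆ maxConv S t :=
    subset_maxConv (maxConv_cvx S t') (h1 (mem_maxConv htS)) (maxConv_subset S t')
  exact subset_antisymm h2 h1

lemma Intvl.ext' {ρ σ : Intvl} (h : ρ.carrier = σ.carrier) : ρ = σ := by
  cases ρ; cases σ; cases h; rfl


/-- for a dataset `D` and a ground metric atom `M` without `⊥`, the set of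
time points at which `𝔍_D` satisfies `M` is a finite union of intervals; consequently each
such time point lies in a unique subset-maximal interval on which `𝔍_D` satisfies `M`, and
the set of subset-maximal intervals of satisfaction is finite (so `inst(r,D)` is well
defined and finite up to the choice of substitutions). -/
theorem sat_times_finite_union_of_intervals (D : Dataset) (M : MA GAtom) (h : M.NoBot) :
    (∃ l : List Intvl, {t : ℚ | sat D.interp t M} = ⋃ ρ ∈ l, ρ.carrier) ∧
    (∀ t : ℚ, sat D.interp t M →
      ∃! ρ : Intvl, t ∈ ρ.carrier ∧ satIvl D.interp M ρ ∧
        ∀ ρ' : Intvl, t ∈ ρ'.carrier → satIvl D.interp M ρ' → ρ'.carrier ⊆ ρ.carrier) ∧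
    {s : Set ℚ | ∃ ρ : Intvl, MaximalSat D.interp M ρ ∧ ρ.carrier = s}.Finite := by
  clear h
  set S := {t : ℚ | sat D.interp t M} with hS
  have hB : BU S := BU_sat D.interp (BU_interp D) M
  obtain ⟨l, hl⟩ := hB
  have hsatIvl : ∀ ρ : Intvl, satIvl D.interp M ρ ↔ ρ.carrier ⊆ S := by
    intro ρ
    rfl
  refine ⟨⟨l, by rw [hl, L2S_eq]⟩, ?_, ?_⟩
  · -- unique maximal interval through each satisfaction point
    intro t ht
    have htS : t ∈ S := ht
    refine ⟨⟨maxConv S t, ⟨t, mem_maxConv htS⟩, maxConv_cvx S t⟩,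
      ⟨mem_maxConv htS, (hsatIvl _).mpr (maxConv_subset S t), ?_⟩, ?_⟩
    · intro ρ' ht' hsat'
      exact subset_maxConv ρ'.convex ht' ((hsatIvl ρ').mp hsat')
    · rintro ρ' ⟨ht', hsat', hmax'⟩
      refine Intvl.ext' (subset_antisymm ?_ ?_)
      · exact subset_maxConv ρ'.convex ht' ((hsatIvl ρ').mp hsat')
      · exact hmax' ⟨maxConv S t, ⟨t, mem_maxConv htS⟩, maxConv_cvx S t⟩
          (mem_maxConv htS) ((hsatIvl _).mpr (maxConv_subset S t))
  · -- finiteness of the set of maximal intervals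
    refine Set.Finite.subset (Set.Finite.image
      (fun σ : Intvl => maxConv S σ.nonempty.choose) l.finite_toSet) ?_
    rintro s ⟨ρ, ⟨hsat, hmax⟩, rfl⟩
    have hρS : ρ.carrier ⊆ S := (hsatIvl ρ).mp hsat
    set t₀ := ρ.nonempty.choose with ht₀def
    have ht₀ : t₀ ∈ ρ.carrier := ρ.nonempty.choose_spec
    have ht₀S : t₀ ∈ S := hρS ht₀
    have hmc : maxConv S t₀ = ρ.carrier :=
      hmax ⟨maxConv S t₀, ⟨t₀, mem_maxConv ht₀S⟩, maxConv_cvx S t₀⟩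
        (subset_maxConv ρ.convex ht₀ hρS) ((hsatIvl _).mpr (maxConv_subset S t₀))
    have ht₀l : t₀ ∈ L2S l := by rw [← hl]; exact ht₀S
    obtain ⟨σ, hσl, ht₀σ⟩ := mem_L2S.mp ht₀l
    refine ⟨σ, hσl, ?_⟩
    show maxConv S σ.nonempty.choose = ρ.carrier
    have hσS : σ.carrier ⊆ S := by rw [hl]; exact subset_L2S hσl
    have hσsub : σ.carrier ⊆ maxConv S t₀ := subset_maxConv σ.convex ht₀σ hσS
    have ht₁ : σ.nonempty.choose ∈ maxConv S t₀ := hσsub σ.nonempty.choose_spec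
    rw [maxConv_eq ht₁, hmc]

end DatalogMTL
end
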